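/- Matrix factorization: fix a target matrix C ∈ ℝ^{n×m} and an integer r ≥ 1, and define f(X, Y) = ½‖XY − C‖²_F on the space ℝ^{n×r} × ℝ^{r×m} (of dimension nr + rm), where ‖·‖_F is the Frobenius norm. Then f is non-convex of grade max{n, m}·r: at every point (X, Y) there exists a linear subspace of ℝ^{n×r} × ℝ^{r×m} of dimension at least max{n, m}·r on which the Hessian quadratic form of f at (X, Y) is nonnegative. -/

import Mathlib

/-!
Along a direction `h = (H, K)` with `HK = 0`, the residual `(X + tH)(Y + tK) - C` is affine in `t`,
so `t ↦ f(z + t h)` is a convex quadratic and the Hessian form at `h` is a sum of squares.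
Every direction `(H, 0)` and every direction `(0, K)` is of this kind; these form subspaces of
dimensions `n r` and `r m`.
-/

theorem iteratedFDeriv_apply_const_eq_iteratedDeriv_line {𝕜 E F : Type*}
    [NontriviallyNormedField 𝕜] [NormedAddCommGroup E] [NormedSpace 𝕜 E]
    [NormedAddCommGroup F] [NormedSpace 𝕜 F]
    {f : E → F} {i : ℕ} (hf : ContDiff 𝕜 i f) (z h : E) :
    iteratedFDeriv 𝕜 i f z (fun _ => h) = iteratedDeriv i (fun t : 𝕜 => f (z + t • h)) 0 := by
  let g : 𝕜 →L[𝕜] E := (ContinuousLinearMap.id 𝕜 𝕜).smulRight h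
  have hshift : ContDiff 𝕜 i (fun y => f (z + y)) := hf.comp (contDiff_const.add contDiff_id)
  have hcomp : (fun t : 𝕜 => f (z + t • h)) = (fun y => f (z + y)) ∘ g := rfl
  rw [iteratedDeriv_eq_iteratedFDeriv, hcomp, g.iteratedFDeriv_comp_right hshift 0 le_rfl]
  simp [g, iteratedFDeriv_comp_add_left]

theorem iteratedDeriv_two_half_sum_sq_affine {ι : Type*} [Fintype ι] (α β : ι → ℝ) (t : ℝ) :
    iteratedDeriv 2 (fun t : ℝ => (1 / 2) * ∑ p, (α p + t * β p) ^ 2) t = ∑ p, β p ^ 2 := by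
  have haffine : ∀ p t, HasDerivAt (fun t => α p + t * β p) (β p) t := fun p t => by
    simpa using ((hasDerivAt_id t).mul_const (β p)).const_add (α p)
  have hfirst : deriv (fun t : ℝ => (1 / 2) * ∑ p, (α p + t * β p) ^ 2) =
      fun t => ∑ p, (α p + t * β p) * β p := by
    funext t
    refine (((HasDerivAt.fun_sum fun p _ => (haffine p t).pow 2).const_mul (1 / 2 : ℝ)).congr_deriv
      ?_).deriv
    rw [Finset.mul_sum]
    refine Finset.sum_congr rfl fun p _ => ?_
    push_cast
    ring
  have hsecond : HasDerivAt (fun t => ∑ p, (α p + t * β p) * β p) (∑ p, β p ^ 2) t :=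
    (HasDerivAt.fun_sum fun p _ => (haffine p t).mul_const (β p)).congr_deriv (by simp only [sq])
  rw [iteratedDeriv_succ, iteratedDeriv_one, hfirst, hsecond.deriv]

section MatrixFactorization

variable {n m r : ℕ}

theorem sum_add_smul_mul_add_smul_of_sum_mul_eq_zero
    (X H : EuclideanSpace ℝ (Fin n × Fin r)) (Y K : EuclideanSpace ℝ (Fin r × Fin m))
    (p : Fin n × Fin m) (hHK : ∑ k, H (p.1, k) * K (k, p.2) = 0) (t : ℝ) :
    ∑ k, (X + t • H) (p.1, k) * (Y + t • K) (k, p.2) =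
      ∑ k, X (p.1, k) * Y (k, p.2) +
        t * ∑ k, (H (p.1, k) * Y (k, p.2) + X (p.1, k) * K (k, p.2)) := by
  have hexpand : ∀ k, (X + t • H) (p.1, k) * (Y + t • K) (k, p.2) =
      X (p.1, k) * Y (k, p.2) + t * (H (p.1, k) * Y (k, p.2) + X (p.1, k) * K (k, p.2)) +
        t ^ 2 * (H (p.1, k) * K (k, p.2)) := fun k => by
    simp only [PiLp.add_apply, PiLp.smul_apply, smul_eq_mul]
    ring
  simp only [hexpand, Finset.sum_add_distrib, ← Finset.mul_sum, hHK, mul_zero, add_zero]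

theorem iteratedFDeriv_two_matrixFactorization_of_sum_mul_eq_zero (C : Matrix (Fin n) (Fin m) ℝ)
    (f : EuclideanSpace ℝ (Fin n × Fin r) × EuclideanSpace ℝ (Fin r × Fin m) → ℝ)
    (hf : ∀ X : EuclideanSpace ℝ (Fin n × Fin r), ∀ Y : EuclideanSpace ℝ (Fin r × Fin m),
      f (X, Y) = (1 / 2) * ∑ p : Fin n × Fin m,
        ((∑ k : Fin r, X (p.1, k) * Y (k, p.2)) - C p.1 p.2) ^ 2)
    (z h : EuclideanSpace ℝ (Fin n × Fin r) × EuclideanSpace ℝ (Fin r × Fin m))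
    (hHK : ∀ p : Fin n × Fin m, ∑ k, h.1 (p.1, k) * h.2 (k, p.2) = 0) :
    iteratedFDeriv ℝ 2 f z ![h, h] = ∑ p : Fin n × Fin m,
      (∑ k, (h.1 (p.1, k) * z.2 (k, p.2) + z.1 (p.1, k) * h.2 (k, p.2))) ^ 2 := by
  have hfun : f = fun x => (1 / 2) * ∑ p : Fin n × Fin m,
      ((∑ k : Fin r, x.1 (p.1, k) * x.2 (k, p.2)) - C p.1 p.2) ^ 2 :=
    funext fun x => hf x.1 x.2
  have hsmooth : ContDiff ℝ 2 f := by
    rw [hfun]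
    fun_prop
  have hline : (fun t : ℝ => f (z + t • h)) = fun t => (1 / 2) * ∑ p : Fin n × Fin m,
      ((∑ k, z.1 (p.1, k) * z.2 (k, p.2) - C p.1 p.2) +
        t * ∑ k, (h.1 (p.1, k) * z.2 (k, p.2) + z.1 (p.1, k) * h.2 (k, p.2))) ^ 2 := by
    funext t
    simp only [hfun, Prod.fst_add, Prod.snd_add, Prod.smul_fst, Prod.smul_snd,
      sum_add_smul_mul_add_smul_of_sum_mul_eq_zero _ _ _ _ _ (hHK _)]
    congr 1
    exact Finset.sum_congr rfl fun p _ => by ring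
  rw [Matrix.vec_single_eq_const, Matrix.vecCons_const,
    iteratedFDeriv_apply_const_eq_iteratedDeriv_line hsmooth, hline,
    iteratedDeriv_two_half_sum_sq_affine]

end MatrixFactorization

theorem matrix_factorization_graded {n m r : ℕ}
    (C : Matrix (Fin n) (Fin m) ℝ)
    (f : EuclideanSpace ℝ (Fin n × Fin r) × EuclideanSpace ℝ (Fin r × Fin m) → ℝ)
    (hf : ∀ X : EuclideanSpace ℝ (Fin n × Fin r), ∀ Y : EuclideanSpace ℝ (Fin r × Fin m),
      f (X, Y) = (1 / 2) * ∑ p : Fin n × Fin m,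
        ((∑ k : Fin r, X (p.1, k) * Y (k, p.2)) - C p.1 p.2) ^ 2) :
    ∀ z : EuclideanSpace ℝ (Fin n × Fin r) × EuclideanSpace ℝ (Fin r × Fin m),
      ∃ V : Submodule ℝ (EuclideanSpace ℝ (Fin n × Fin r) × EuclideanSpace ℝ (Fin r × Fin m)),
        max n m * r ≤ Module.finrank ℝ V ∧
        ∀ h ∈ V, 0 ≤ iteratedFDeriv ℝ 2 f z ![h, h] := by
  intro z
  have hessian_nonneg : ∀ h, (∀ p : Fin n × Fin m, ∑ k, h.1 (p.1, k) * h.2 (k, p.2) = 0) →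
      0 ≤ iteratedFDeriv ℝ 2 f z ![h, h] := fun h hHK => by
    rw [iteratedFDeriv_two_matrixFactorization_of_sum_mul_eq_zero C f hf z h hHK]
    exact Finset.sum_nonneg fun p _ => sq_nonneg _
  rcases le_total m n with hmn | hnm
  · refine ⟨LinearMap.range (LinearMap.inl ℝ _ _), ?_, ?_⟩
    · rw [LinearMap.finrank_range_of_inj LinearMap.inl_injective, finrank_euclideanSpace,
        Fintype.card_prod, Fintype.card_fin, Fintype.card_fin, max_eq_left hmn]
    · rintro _ ⟨H, rfl⟩
      exact hessian_nonneg _ fun p => by simp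
  · refine ⟨LinearMap.range (LinearMap.inr ℝ _ _), ?_, ?_⟩
    · rw [LinearMap.finrank_range_of_inj LinearMap.inr_injective, finrank_euclideanSpace,
        Fintype.card_prod, Fintype.card_fin, Fintype.card_fin, max_eq_right hnm, Nat.mul_comm]
    · rintro _ ⟨K, rfl⟩
      exact hessian_nonneg _ fun p => by simp
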